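/- Let H be a real inner product space, α ∈ (0,1), Δt > 0, n ≥ 1 an integer, and y⁰, y¹, …, yⁿ ∈ H. Then ⟨δᵅyⁿ, yⁿ⟩ ≥ (1/2)·δᵅwⁿ, where wⁱ = ‖yⁱ‖² and δᵅ denotes the L1 operator applied, respectively, to the H-valued sequence (yⁱ) and to the scalar sequence (wⁱ). Equivalently, Σ_{i=0}^{n−1} b_{n−i}(1−α)⟨y^{i+1} − yⁱ, yⁿ⟩ ≥ (1/2) Σ_{i=0}^{n−1} b_{n−i}(1−α)(‖y^{i+1}‖² − ‖yⁱ‖²). -/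

import Mathlib

open RealInnerProductSpace

/-- The L1 weights `b_j(β) = j^β - (j-1)^β`. -/
noncomputable def bcoef (β : ℝ) (j : ℕ) : ℝ := (j : ℝ) ^ β - ((j : ℝ) - 1) ^ β

/-- The L1 discretization of the Caputo derivative of order `α` with time step `Δt`. -/
noncomputable def L1delta {H : Type*} [AddCommGroup H] [Module ℝ H]
    (α Δt : ℝ) (y : ℕ → H) (n : ℕ) : H :=
  (Δt ^ (-α) / Real.Gamma (2 - α)) •
    ∑ i ∈ Finset.range n, bcoef (1 - α) (n - i) • (y (i + 1) - y i)

/-- Abel summation by parts. -/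
lemma abel_sum (a f : ℕ → ℝ) (n : ℕ) :
    ∑ i ∈ Finset.range (n + 1), a i * (f (i + 1) - f i)
      = a n * f (n + 1) - a 0 * f 0
        - ∑ k ∈ Finset.range n, (a (k + 1) - a k) * f (k + 1) := by
  induction n with
  | zero => simp; ring
  | succ n ih =>
      rw [Finset.sum_range_succ, ih, Finset.sum_range_succ]
      ring

lemma bcoef_nonneg {β : ℝ} (hβ : 0 ≤ β) {j : ℕ} (hj : 1 ≤ j) : 0 ≤ bcoef β j := by
  unfold bcoef
  have h1 : (0 : ℝ) ≤ (j : ℝ) - 1 := by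
    have : (1 : ℝ) ≤ (j : ℝ) := by exact_mod_cast hj
    linarith
  have h2 : ((j : ℝ) - 1) ^ β ≤ (j : ℝ) ^ β :=
    Real.rpow_le_rpow h1 (by linarith) hβ
  linarith

lemma bcoef_succ_le {β : ℝ} (hβ0 : 0 < β) (hβ1 : β < 1) {j : ℕ} (hj : 1 ≤ j) :
    bcoef β (j + 1) ≤ bcoef β j := by
  have hc := (Real.concaveOn_rpow hβ0.le hβ1.le).2
    (x := (j : ℝ) - 1) (y := (j : ℝ) + 1)
  have h1 : (0 : ℝ) ≤ (j : ℝ) - 1 := by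
    have : (1 : ℝ) ≤ (j : ℝ) := by exact_mod_cast hj
    linarith
  have h2 : (0 : ℝ) ≤ (j : ℝ) + 1 := by positivity
  have key := hc (Set.mem_Ici.mpr h1) (Set.mem_Ici.mpr h2)
    (a := 1/2) (b := 1/2) (by norm_num) (by norm_num) (by norm_num)
  have hmid : (1/2 : ℝ) • ((j : ℝ) - 1) + (1/2 : ℝ) • ((j : ℝ) + 1) = (j : ℝ) := by
    simp [smul_eq_mul]; ring
  rw [hmid] at key
  simp only [smul_eq_mul] at key
  unfold bcoef
  push_cast
  have hsimp : (j : ℝ) + 1 - 1 = (j : ℝ) := by ring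
  rw [hsimp]
  linarith

private lemma inner_le_half {H : Type*} [NormedAddCommGroup H] [InnerProductSpace ℝ H]
    (u v : H) : ⟪u, v⟫ ≤ (1/2) * ‖u‖ ^ 2 + (1/2) * ‖v‖ ^ 2 := by
  have h := real_inner_le_norm u v
  nlinarith [sq_nonneg (‖u‖ - ‖v‖)]

/-- The discrete coercivity inequality `⟨δᵅyⁿ, yⁿ⟩ ≥ (1/2)·δᵅ‖yⁿ‖²` for the L1 operator,
together with its equivalent weighted-sum form. -/
theorem stmt_9 (H : Type*) [NormedAddCommGroup H] [InnerProductSpace ℝ H]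
    (α Δt : ℝ) (hα : α ∈ Set.Ioo (0 : ℝ) 1) (hΔt : 0 < Δt)
    (n : ℕ) (hn : 1 ≤ n) (y : ℕ → H) :
    ⟪L1delta α Δt y n, y n⟫ ≥ (1 / 2) * L1delta α Δt (fun i => ‖y i‖ ^ 2) n ∧
      ∑ i ∈ Finset.range n, bcoef (1 - α) (n - i) * ⟪y (i + 1) - y i, y n⟫
        ≥ (1 / 2) * ∑ i ∈ Finset.range n,
            bcoef (1 - α) (n - i) * (‖y (i + 1)‖ ^ 2 - ‖y i‖ ^ 2) := by
  obtain ⟨hα0, hα1⟩ := hα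
  have hβ0 : (0 : ℝ) < 1 - α := by linarith
  have hβ1 : (1 : ℝ) - α < 1 := by linarith
  obtain ⟨m, rfl⟩ : ∃ m, n = m + 1 := ⟨n - 1, (Nat.succ_pred_eq_of_pos hn).symm⟩
  set N := m + 1 with hN
  set a : ℕ → ℝ := fun i => bcoef (1 - α) (N - i) with ha
  set v := y N with hv
  -- the key weighted-sum inequality
  have key : ∑ i ∈ Finset.range N, a i * ⟪y (i + 1) - y i, v⟫
      ≥ (1 / 2) * ∑ i ∈ Finset.range N, a i * (‖y (i + 1)‖ ^ 2 - ‖y i‖ ^ 2) := by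
    have haN : a m = 1 := by
      simp only [ha, hN]
      have : m + 1 - m = 1 := by omega
      rw [this]
      unfold bcoef
      rw [Nat.cast_one, Real.one_rpow]
      norm_num
      exact Real.zero_rpow (by linarith)
    have ha0 : 0 ≤ a 0 := by
      simp only [ha]
      exact bcoef_nonneg hβ0.le (by omega)
    have hD : ∀ k ∈ Finset.range m, 0 ≤ a (k + 1) - a k := by
      intro k hk
      rw [Finset.mem_range] at hk
      simp only [ha]
      have h1 : N - (k + 1) = (N - k) - 1 := by omega
      have h2 : N - k = ((N - (k + 1)) + 1) := by omega
      rw [h2]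
      have : 1 ≤ N - (k + 1) := by omega
      linarith [bcoef_succ_le hβ0 hβ1 this]
    have habel1 := abel_sum a (fun i => ⟪y i, v⟫) m
    have habel2 := abel_sum a (fun i => ‖y i‖ ^ 2) m
    simp only [← inner_sub_left] at habel1
    have htel : ∑ k ∈ Finset.range m, (a (k + 1) - a k) = a m - a 0 :=
      Finset.sum_range_sub a m
    have hvv : ⟪v, v⟫ = ‖v‖ ^ 2 := real_inner_self_eq_norm_sq v
    -- bound the middle sums
    have hsum_le : ∑ k ∈ Finset.range m, (a (k + 1) - a k) * ⟪y (k + 1), v⟫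
        ≤ (1/2) * ∑ k ∈ Finset.range m, (a (k + 1) - a k) * ‖y (k + 1)‖ ^ 2
          + (1/2) * ((a m - a 0) * ‖v‖ ^ 2) := by
      have step : ∑ k ∈ Finset.range m, (a (k + 1) - a k) * ⟪y (k + 1), v⟫
          ≤ ∑ k ∈ Finset.range m,
              (a (k + 1) - a k) * ((1/2) * ‖y (k + 1)‖ ^ 2 + (1/2) * ‖v‖ ^ 2) := by
        refine Finset.sum_le_sum fun k hk => ?_
        exact mul_le_mul_of_nonneg_left (inner_le_half _ _) (hD k hk)
      have expand : ∑ k ∈ Finset.range m,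
            (a (k + 1) - a k) * ((1/2) * ‖y (k + 1)‖ ^ 2 + (1/2) * ‖v‖ ^ 2)
          = (1/2) * ∑ k ∈ Finset.range m, (a (k + 1) - a k) * ‖y (k + 1)‖ ^ 2
            + (1/2) * ((∑ k ∈ Finset.range m, (a (k + 1) - a k)) * ‖v‖ ^ 2) := by
        rw [Finset.mul_sum, Finset.sum_mul, Finset.mul_sum, ← Finset.sum_add_distrib]
        refine Finset.sum_congr rfl fun k _ => by ring
      rw [expand, htel] at step
      exact step
    have h0 : a 0 * ⟪y 0, v⟫ ≤ a 0 * ((1/2) * ‖y 0‖ ^ 2 + (1/2) * ‖v‖ ^ 2) :=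
      mul_le_mul_of_nonneg_left (inner_le_half _ _) ha0
    rw [habel1, habel2, haN, hvv]
    rw [haN] at hsum_le
    nlinarith [hsum_le, h0]
  refine ⟨?_, key⟩
  -- reduce the L1delta inequality to the key inequality
  have hc : 0 ≤ Δt ^ (-α) / Real.Gamma (2 - α) := by
    have hg : 0 < Real.Gamma (2 - α) := Real.Gamma_pos_of_pos (by linarith)
    positivity
  have hL1 : ⟪L1delta α Δt y N, y N⟫
      = (Δt ^ (-α) / Real.Gamma (2 - α)) * ∑ i ∈ Finset.range N, a i * ⟪y (i + 1) - y i, v⟫ := by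
    unfold L1delta
    rw [real_inner_smul_left, sum_inner]
    congr 1
    exact Finset.sum_congr rfl fun i _ => real_inner_smul_left _ _ _
  have hL2 : L1delta α Δt (fun i => ‖y i‖ ^ 2) N
      = (Δt ^ (-α) / Real.Gamma (2 - α))
          * ∑ i ∈ Finset.range N, a i * (‖y (i + 1)‖ ^ 2 - ‖y i‖ ^ 2) := by
    unfold L1delta
    simp only [smul_eq_mul]
    rfl
  rw [hL1, hL2]
  have := mul_le_mul_of_nonneg_left key hc
  linarith
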